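/- Let A be a finite set, ω ∈ A^{ℤ^d}, (B,‖·‖) a Banach space, (Q_j) a Følner sequence in ℤ^d, and F : F → B a bounded, ω-invariant, almost additive field with boundary term b. Assume all frequencies ν_P := lim_j ♯_P(ω|_{Q_j})/|Q_j| exist, and let F̄ := lim_j F(Q_j)/|Q_j| (which exists). Then for every L ∈ ℕ: ‖ F̄ − Σ_{P∈A^{Λ_L}} ν_P F̃(P)/|Λ_L| ‖ ≤ b(Λ_L)/|Λ_L|. -/

import Mathlib

open Filter Topology

/-- The group `ℤ^d`. -/
abbrev Zd (d : ℕ) := Fin d → ℤ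

/-- The `ℓ¹`-distance on `ℤ^d`. -/
def distZ {d : ℕ} (v w : Zd d) : ℕ := ∑ i, (v i - w i).natAbs

/-- The translation action `τ̃_g Λ = Λ - g` on finite subsets of `ℤ^d`. -/
def translateZ {d : ℕ} (g : Zd d) (Λ : Finset (Zd d)) : Finset (Zd d) :=
  Λ.image (fun v => v - g)

/-- The (two-sided) `r`-boundary of a finite set `Λ ⊆ ℤ^d`. -/
def rBoundaryZ {d : ℕ} (r : ℕ) (Λ : Finset (Zd d)) : Set (Zd d) :=
  {x | x ∉ Λ ∧ ∃ v ∈ Λ, distZ x v ≤ r} ∪ {v | v ∈ Λ ∧ ∃ x, x ∉ Λ ∧ distZ v x ≤ r}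

/-- A Følner sequence in `ℤ^d`: nonempty finite sets whose `r`-boundary is
asymptotically negligible compared to the volume, for every `r > 0`. -/
def IsFolnerZ {d : ℕ} (Q : ℕ → Finset (Zd d)) : Prop :=
  (∀ j, (Q j).Nonempty) ∧
  ∀ r : ℕ, 0 < r →
    Tendsto (fun j => ((rBoundaryZ r (Q j)).ncard : ℝ) / (Q j).card) atTop (nhds 0)

/-- A boundary term on the finite subsets of `ℤ^d`. -/
structure BoundaryTermZ (d : ℕ) where
  b : Finset (Zd d) → ℝ
  nonneg : ∀ Λ, 0 ≤ b Λ
  invariant : ∀ g Λ, b (translateZ g Λ) = b Λ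
  folner : ∀ Q : ℕ → Finset (Zd d), IsFolnerZ Q →
    Tendsto (fun j => b (Q j) / (Q j).card) atTop (nhds 0)
  bounded : ∃ D : ℝ, ∀ Λ : Finset (Zd d), Λ.Nonempty → b Λ ≤ D * Λ.card
  union_le : ∀ Λ Λ', b (Λ ∪ Λ') ≤ b Λ + b Λ'
  inter_le : ∀ Λ Λ', b (Λ ∩ Λ') ≤ b Λ + b Λ'
  sdiff_le : ∀ Λ Λ', b (Λ \ Λ') ≤ b Λ + b Λ'

/-- The bound `D_b` of a boundary term. -/
noncomputable def BoundaryTermZ.D {d : ℕ} (b : BoundaryTermZ d) : ℝ :=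
  sSup {x | ∃ Λ : Finset (Zd d), Λ.Nonempty ∧ x = b.b Λ / Λ.card}

/-- Two patterns (given as total functions restricted to their domains) are
equivalent iff one is a translate of the other:  `P' |_{Λ'}` is the
`g`-translate of `P |_Λ`. -/
def PatEquivZ {d : ℕ} {A : Type*} (Λ : Finset (Zd d)) (P : Zd d → A)
    (Λ' : Finset (Zd d)) (P' : Zd d → A) : Prop :=
  ∃ g : Zd d, Λ' = translateZ g Λ ∧ ∀ v ∈ Λ, P' (v - g) = P v

open Classical in
/-- `♯_P P'`: the number of occurrences of (translates of) the pattern `P|_Λ`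
in the pattern `P'|_{Λ'}`. -/
noncomputable def sharpZ {d : ℕ} {A : Type*} (Λ : Finset (Zd d)) (P : Zd d → A)
    (Λ' : Finset (Zd d)) (P' : Zd d → A) : ℕ :=
  (Λ'.powerset.filter (fun Λ'' => PatEquivZ Λ P Λ'' P')).card

/-- Almost additivity of a field with respect to a boundary term. -/
def AlmostAdditiveZ {d : ℕ} {B : Type*} [NormedAddCommGroup B]
    (F : Finset (Zd d) → B) (b : BoundaryTermZ d) : Prop :=
  ∀ (n : ℕ) (Λs : Fin n → Finset (Zd d)),
    (∀ i j, i ≠ j → Disjoint (Λs i) (Λs j)) →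
    ‖F (Finset.univ.biUnion Λs) - ∑ i, F (Λs i)‖ ≤ ∑ i, b.b (Λs i)

/-- `ω`-invariance of a field. -/
def InvariantZ {d : ℕ} {A : Type*} {B : Type*} (ω : Zd d → A)
    (F : Finset (Zd d) → B) : Prop :=
  ∀ Λ Λ' : Finset (Zd d), PatEquivZ Λ ω Λ' ω → F Λ = F Λ'

/-- `Ft` is the pattern function of the `ω`-invariant field `F`. -/
def IsPatternFnZ {d : ℕ} {A : Type*} {B : Type*} [Zero B] (ω : Zd d → A)
    (F : Finset (Zd d) → B) (Ft : Finset (Zd d) → (Zd d → A) → B) : Prop :=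
  (∀ (Λ : Finset (Zd d)) (P : Zd d → A) (Λ' : Finset (Zd d)),
      PatEquivZ Λ P Λ' ω → Ft Λ P = F Λ') ∧
  (∀ (Λ : Finset (Zd d)) (P : Zd d → A),
      (∀ Λ' : Finset (Zd d), ¬ PatEquivZ Λ P Λ' ω) → Ft Λ P = 0)

/-- Extension of a pattern `P : Λ → A` to a total function on `ℤ^d`,
filling in with the coloring `ω` off `Λ` (the quantities below only depend on
the restriction to `Λ`). -/
def extendPatZ {d : ℕ} {A : Type*} (ω : Zd d → A) (Λ : Finset (Zd d))
    (P : {x // x ∈ Λ} → A) : Zd d → A :=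
  fun v => if h : v ∈ Λ then P ⟨v, h⟩ else ω v

/-- The cube `Λ_L = ([0,L) ∩ ℤ)^d`. -/
noncomputable def stdCube (d L : ℕ) : Finset (Zd d) :=
  Fintype.piFinset (fun _ => Finset.Ico (0 : ℤ) (L : ℤ))

/-- The bound `C_F` of a bounded field. -/
noncomputable def fieldBoundZ {d : ℕ} {B : Type*} [NormedAddCommGroup B]
    (F : Finset (Zd d) → B) : ℝ :=
  sSup {x | ∃ Λ : Finset (Zd d), Λ.Nonempty ∧ x = ‖F Λ‖ / Λ.card}

/-!
Tile `Q` by the translates `Λ_L + h` that it contains, sorted into the `|Λ_L|` grids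
`t + L ℤ^d`, `t ∈ Λ_L`. On one grid the cubes are disjoint, so almost additivity bounds
`F(Q) - Σ F(Λ_L + h)` by `b(Λ_L)` per cube plus `O(|∂^{dL+1} Q|)` for the uncovered part, which
lies near the boundary. Summing over the grids counts every inner translate once, and grouping
the translates by their pattern `P` turns `Σ_h F(Λ_L + h)` into `Σ_P ♯_P(Q) F̃(P)`. Dividing by
`|Λ_L| |Q_j|` and letting `j → ∞` leaves only the error `b(Λ_L)/|Λ_L|`.
-/
namespace AlmostAdditiveZ

variable {d : ℕ} {B : Type*} [NormedAddCommGroup B] {F : Finset (Zd d) → B} {b : BoundaryTermZ d}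

theorem norm_sub_sum_le (hF : AlmostAdditiveZ F b) {ι : Type*} (s : Finset ι)
    (f : ι → Finset (Zd d)) (hdisj : (s : Set ι).PairwiseDisjoint f) :
    ‖F (s.biUnion f) - ∑ i ∈ s, F (f i)‖ ≤ ∑ i ∈ s, b.b (f i) := by
  classical
  let e := s.equivFin.symm
  have h := hF s.card (fun k => f (e k)) fun k l hkl =>
    hdisj (e k).2 (e l).2 fun h => hkl (e.injective (Subtype.ext h))
  have hU : Finset.univ.biUnion (fun k => f (e k)) = s.biUnion f := by
    ext v
    simp only [Finset.mem_biUnion, Finset.mem_univ, true_and]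
    exact ⟨fun ⟨k, hk⟩ => ⟨e k, (e k).2, hk⟩,
      fun ⟨i, hi, hv⟩ => ⟨e.symm ⟨i, hi⟩, by simpa using hv⟩⟩
  rwa [hU, e.sum_comp (fun i => F (f i)), e.sum_comp (fun i => b.b (f i)),
    s.sum_coe_sort (fun i => F (f i)), s.sum_coe_sort (fun i => b.b (f i))] at h

/-- The uncovered part `Q \ ⋃ f i` is treated as one more piece, estimated by the bounds on
`F` and `b`. -/
theorem norm_sub_sum_le_of_biUnion_subset (hF : AlmostAdditiveZ F b) {C D : ℝ}
    (hC : ∀ Λ : Finset (Zd d), Λ.Nonempty → ‖F Λ‖ ≤ C * Λ.card)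
    (hD : ∀ Λ : Finset (Zd d), Λ.Nonempty → b.b Λ ≤ D * Λ.card)
    {ι : Type*} (s : Finset ι) (f : ι → Finset (Zd d)) (hdisj : (s : Set ι).PairwiseDisjoint f)
    {Q : Finset (Zd d)} (hsub : s.biUnion f ⊆ Q) :
    ‖F Q - ∑ i ∈ s, F (f i)‖ ≤ (C + D) * (Q \ s.biUnion f).card + ∑ i ∈ s, b.b (f i) := by
  classical
  set R := Q \ s.biUnion f
  rcases R.eq_empty_or_nonempty with hR | hR
  · rw [Finset.sdiff_eq_empty_iff_subset.mp hR |>.antisymm hsub, hR]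
    simpa using hF.norm_sub_sum_le s f hdisj
  let g : Option ι → Finset (Zd d) := fun o => o.elim R f
  have hg : ((s.insertNone : Finset (Option ι)) : Set (Option ι)).PairwiseDisjoint g := by
    rintro (_ | i) hi (_ | j) hj hij
    · exact absurd rfl hij
    · exact Finset.sdiff_disjoint.mono_right (Finset.subset_biUnion_of_mem f (by simpa using hj))
    · exact Finset.sdiff_disjoint.symm.mono_left (Finset.subset_biUnion_of_mem f (by simpa using hi))
    · exact hdisj (by simpa using hi) (by simpa using hj) (fun h => hij (by rw [h]))
  have hUnion : s.insertNone.biUnion g = R ∪ s.biUnion f := by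
    ext v
    simp [g, Option.exists]
  have h := hF.norm_sub_sum_le s.insertNone g hg
  rw [hUnion, Finset.sdiff_union_of_subset hsub, Finset.sum_insertNone, Finset.sum_insertNone] at h
  calc ‖F Q - ∑ i ∈ s, F (f i)‖
      ≤ ‖F Q - (F R + ∑ i ∈ s, F (f i))‖ + ‖F R‖ := by
        rw [← sub_add_cancel (F Q - ∑ i ∈ s, F (f i)) (F R), sub_right_comm, sub_sub]
        exact norm_add_le _ _
    _ ≤ (b.b R + ∑ i ∈ s, b.b (f i)) + C * R.card := add_le_add h (hC R hR)
    _ ≤ (C + D) * R.card + ∑ i ∈ s, b.b (f i) := by linarith [hD R hR]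

end AlmostAdditiveZ

theorem rBoundaryZ_finite {d : ℕ} (r : ℕ) (Λ : Finset (Zd d)) : (rBoundaryZ r Λ).Finite := by
  refine Set.Finite.union ?_ (Λ.finite_toSet.subset fun x hx => hx.1)
  refine (Λ.finite_toSet.biUnion fun v _ =>
    Set.Finite.pi' (t := fun i => Set.Icc (v i - r) (v i + r)) fun i =>
      Set.finite_Icc _ _).subset ?_
  rintro x ⟨-, v, hv, hxv⟩
  refine Set.mem_biUnion hv fun i => ?_
  have : (x i - v i).natAbs ≤ r :=
    (Finset.single_le_sum (f := fun i => (x i - v i).natAbs) (fun _ _ => Nat.zero_le _)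
      (Finset.mem_univ i)).trans hxv
  simp only [Set.mem_Icc]
  omega

theorem mem_translateZ {d : ℕ} {g x : Zd d} {Λ : Finset (Zd d)} :
    x ∈ translateZ g Λ ↔ x + g ∈ Λ := by
  simp [translateZ, sub_eq_iff_eq_add]

section Cubes

variable {d L : ℕ}

theorem mem_stdCube {v : Zd d} : v ∈ stdCube d L ↔ ∀ i, 0 ≤ v i ∧ v i < L := by
  simp [stdCube, Fintype.mem_piFinset]

theorem stdCube_nonempty (hL : 0 < L) : (stdCube d L).Nonempty :=
  ⟨0, mem_stdCube.mpr fun _ => ⟨le_rfl, by simpa using hL⟩⟩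

variable (L) in
/-- The cube `Λ_L + h` (`translateZ g` shifts by `-g`). -/
noncomputable def cubeAt (h : Zd d) : Finset (Zd d) := translateZ (-h) (stdCube d L)

theorem mem_cubeAt {h x : Zd d} : x ∈ cubeAt L h ↔ ∀ i, h i ≤ x i ∧ x i < h i + L := by
  simp only [cubeAt, mem_translateZ, mem_stdCube, ← sub_eq_add_neg, Pi.sub_apply]
  exact forall_congr' fun i => by omega

theorem self_mem_cubeAt (hL : 0 < L) (h : Zd d) : h ∈ cubeAt L h :=
  mem_cubeAt.mpr fun _ => ⟨le_rfl, by omega⟩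

theorem cubeAt_injective (hL : 0 < L) : Function.Injective (cubeAt (d := d) L) := by
  intro h h' hh'
  have h₁ := mem_cubeAt.mp (hh' ▸ self_mem_cubeAt hL h)
  have h₂ := mem_cubeAt.mp (hh' ▸ self_mem_cubeAt hL h')
  exact funext fun i => by have := h₁ i; have := h₂ i; omega

theorem distZ_le_of_mem_cubeAt {h x y : Zd d} (hx : x ∈ cubeAt L h) (hy : y ∈ cubeAt L h) :
    distZ x y ≤ d * L := by
  calc distZ x y ≤ ∑ _i : Fin d, L := Finset.sum_le_sum fun i _ => by
          have := mem_cubeAt.mp hx i; have := mem_cubeAt.mp hy i; omega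
    _ = d * L := by simp

variable (L) in
/-- The corner of the cube of the grid `h + L ℤ^d` lying in `Λ_L`. -/
def cubeOffset (h : Zd d) : Zd d := fun i => h i % L

theorem cubeOffset_mem_stdCube (hL : 0 < L) (h : Zd d) : cubeOffset L h ∈ stdCube d L :=
  mem_stdCube.mpr fun i => ⟨Int.emod_nonneg _ (by omega), Int.emod_lt_of_pos _ (by omega)⟩

theorem disjoint_cubeAt_of_cubeOffset_eq {h h' : Zd d} (hoff : cubeOffset L h = cubeOffset L h')
    (hne : h ≠ h') : Disjoint (cubeAt L h) (cubeAt L h') := by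
  refine Finset.disjoint_left.mpr fun x hx hx' => hne (funext fun i => ?_)
  have := mem_cubeAt.mp hx i
  have := mem_cubeAt.mp hx' i
  have hdvd : (L : ℤ) ∣ h i - h' i := Int.ModEq.dvd (congrFun hoff i).symm
  have := Int.eq_zero_of_abs_lt_dvd hdvd (abs_lt.mpr ⟨by omega, by omega⟩)
  omega

end Cubes

section Tiling

variable {d L : ℕ}

variable (L) in
noncomputable def innerCorners (Q : Finset (Zd d)) : Finset (Zd d) :=
  Q.filter fun h => cubeAt L h ⊆ Q

variable (L) in
noncomputable def gridCorners (Q : Finset (Zd d)) (t : Zd d) : Finset (Zd d) :=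
  (innerCorners L Q).filter fun h => cubeOffset L h = t

theorem biUnion_gridCorners_subset (Q : Finset (Zd d)) (t : Zd d) :
    (gridCorners L Q t).biUnion (cubeAt L) ⊆ Q := by
  intro x hx
  obtain ⟨h, hh, hx⟩ := Finset.mem_biUnion.mp hx
  simp only [gridCorners, innerCorners, Finset.mem_filter] at hh
  exact hh.1.2 hx

theorem pairwiseDisjoint_gridCorners (Q : Finset (Zd d)) (t : Zd d) :
    ((gridCorners L Q t : Finset (Zd d)) : Set (Zd d)).PairwiseDisjoint (cubeAt L) := by
  intro h hh h' hh' hne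
  simp only [gridCorners, Finset.coe_filter, Set.mem_ofPred_eq] at hh hh'
  exact disjoint_cubeAt_of_cubeOffset_eq (hh.2.trans hh'.2.symm) hne

/-- A point of `Q` missed by the grid cubes lies in a grid cube leaving `Q`,
hence within distance `d L` of the complement. -/
theorem sdiff_biUnion_gridCorners_subset_rBoundaryZ (hL : 0 < L) (Q : Finset (Zd d))
    {t : Zd d} (ht : t ∈ stdCube d L) :
    ↑(Q \ (gridCorners L Q t).biUnion (cubeAt L)) ⊆ rBoundaryZ (d * L + 1) Q := by
  intro x hx
  obtain ⟨hxQ, hxn⟩ := Finset.mem_sdiff.mp hx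
  let h : Zd d := fun i => x i - (x i - t i) % L
  have hxh : x ∈ cubeAt L h := mem_cubeAt.mpr fun i => by
    have := Int.emod_nonneg (x i - t i) (by omega : (L : ℤ) ≠ 0)
    have := Int.emod_lt_of_pos (x i - t i) (by omega : (0 : ℤ) < L)
    constructor <;> simp only [h] <;> omega
  have hoff : cubeOffset L h = t := funext fun i => by
    have hti := mem_stdCube.mp ht i
    have : h i ≡ t i [ZMOD L] := by
      simpa [h] using ((Int.mod_modEq (x i - t i) L).sub_left (x i))
    exact Eq.trans this (Int.emod_eq_of_lt hti.1 hti.2)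
  have hnsub : ¬ cubeAt L h ⊆ Q := fun hsub => hxn <| Finset.mem_biUnion.mpr
    ⟨h, by simp [gridCorners, innerCorners, hsub, hoff, hsub (self_mem_cubeAt hL h)], hxh⟩
  obtain ⟨y, hyh, hyQ⟩ := Finset.not_subset.mp hnsub
  exact Or.inr ⟨hxQ, y, hyQ, (distZ_le_of_mem_cubeAt hxh hyh).trans (Nat.le_succ _)⟩

variable {B : Type*} [NormedAddCommGroup B] {F : Finset (Zd d) → B}
  {b : BoundaryTermZ d} {C D : ℝ}

theorem norm_sub_sum_gridCorners_le (hF : AlmostAdditiveZ F b)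
    (hC : ∀ Λ : Finset (Zd d), Λ.Nonempty → ‖F Λ‖ ≤ C * Λ.card)
    (hD : ∀ Λ : Finset (Zd d), Λ.Nonempty → b.b Λ ≤ D * Λ.card) (hCD : 0 ≤ C + D)
    (hL : 0 < L) (Q : Finset (Zd d)) {t : Zd d} (ht : t ∈ stdCube d L) :
    ‖F Q - ∑ h ∈ gridCorners L Q t, F (cubeAt L h)‖
      ≤ (C + D) * (rBoundaryZ (d * L + 1) Q).ncard
        + (gridCorners L Q t).card * b.b (stdCube d L) := by
  have hR : ((Q \ (gridCorners L Q t).biUnion (cubeAt L)).card : ℝ)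
      ≤ (rBoundaryZ (d * L + 1) Q).ncard := by
    rw [← Set.ncard_coe_finset]
    exact_mod_cast Set.ncard_le_ncard (sdiff_biUnion_gridCorners_subset_rBoundaryZ hL Q ht)
      (rBoundaryZ_finite _ _)
  have hb : ∑ h ∈ gridCorners L Q t, b.b (cubeAt L h)
      = (gridCorners L Q t).card * b.b (stdCube d L) := by
    simp [cubeAt, b.invariant]
  calc ‖F Q - ∑ h ∈ gridCorners L Q t, F (cubeAt L h)‖
      ≤ (C + D) * (Q \ (gridCorners L Q t).biUnion (cubeAt L)).card
        + ∑ h ∈ gridCorners L Q t, b.b (cubeAt L h) :=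
        hF.norm_sub_sum_le_of_biUnion_subset hC hD _ _ (pairwiseDisjoint_gridCorners Q t)
          (biUnion_gridCorners_subset Q t)
    _ ≤ _ := by rw [hb]; gcongr

theorem norm_card_smul_sub_sum_innerCorners_le [NormedSpace ℝ B] (hF : AlmostAdditiveZ F b)
    (hC : ∀ Λ : Finset (Zd d), Λ.Nonempty → ‖F Λ‖ ≤ C * Λ.card)
    (hD : ∀ Λ : Finset (Zd d), Λ.Nonempty → b.b Λ ≤ D * Λ.card)
    (hL : 0 < L) (Q : Finset (Zd d)) :
    ‖((stdCube d L).card : ℝ) • F Q - ∑ h ∈ innerCorners L Q, F (cubeAt L h)‖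
      ≤ (C + D) * ((stdCube d L).card * (rBoundaryZ (d * L + 1) Q).ncard)
        + Q.card * b.b (stdCube d L) := by
  set Λ := stdCube d L
  have hΛ := stdCube_nonempty (d := d) hL
  have hCD : 0 ≤ C + D := by
    have hpos : (0 : ℝ) < Λ.card := by exact_mod_cast hΛ.card_pos
    have := (norm_nonneg _).trans (hC Λ hΛ)
    have := (b.nonneg Λ).trans (hD Λ hΛ)
    nlinarith
  have hmaps : ∀ h ∈ innerCorners L Q, cubeOffset L h ∈ Λ := fun h _ =>
    cubeOffset_mem_stdCube hL h
  have hsplit : (Λ.card : ℝ) • F Q - ∑ h ∈ innerCorners L Q, F (cubeAt L h)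
      = ∑ t ∈ Λ, (F Q - ∑ h ∈ gridCorners L Q t, F (cubeAt L h)) := by
    rw [Finset.sum_sub_distrib, Finset.sum_const, Nat.cast_smul_eq_nsmul,
      ← Finset.sum_fiberwise_of_maps_to hmaps]
    rfl
  have hcard : ∑ t ∈ Λ, ((gridCorners L Q t).card : ℝ) ≤ Q.card := by
    have : ∑ t ∈ Λ, (gridCorners L Q t).card = (innerCorners L Q).card :=
      (Finset.card_eq_sum_card_fiberwise hmaps).symm
    exact_mod_cast this ▸ Finset.card_filter_le _ _
  calc _ ≤ ∑ t ∈ Λ, ((C + D) * (rBoundaryZ (d * L + 1) Q).ncard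
          + (gridCorners L Q t).card * b.b Λ) := by
        rw [hsplit]
        exact (norm_sum_le _ _).trans (Finset.sum_le_sum fun t ht =>
          norm_sub_sum_gridCorners_le hF hC hD hCD hL Q ht)
    _ ≤ _ := by
        rw [Finset.sum_add_distrib, Finset.sum_const, nsmul_eq_mul, ← Finset.sum_mul]
        have := mul_le_mul_of_nonneg_right hcard (b.nonneg Λ)
        linarith

end Tiling

section Patterns

variable {d : ℕ} {A : Type*} (ω : Zd d → A) {L : ℕ}

variable (L) in
def patternAt (h : Zd d) : {x // x ∈ stdCube d L} → A := fun v => ω (v + h)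

variable {ω} in
theorem IsPatternFnZ.apply_patternAt {B : Type*} [Zero B] {F : Finset (Zd d) → B}
    {Ft : Finset (Zd d) → (Zd d → A) → B} (hFt : IsPatternFnZ ω F Ft) (h : Zd d) :
    Ft (stdCube d L) (extendPatZ ω (stdCube d L) (patternAt ω L h)) = F (cubeAt L h) :=
  hFt.1 _ _ _ ⟨-h, rfl, fun v hv => by simp [extendPatZ, hv, patternAt]⟩

open Classical in
theorem sharpZ_extendPatZ_stdCube (hL : 0 < L) (P : {x // x ∈ stdCube d L} → A)
    (Q : Finset (Zd d)) :
    sharpZ (stdCube d L) (extendPatZ ω (stdCube d L) P) Q ω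
      = ((innerCorners L Q).filter fun h => patternAt ω L h = P).card := by
  symm
  refine Finset.card_bij (fun h _ => cubeAt L h) ?_ (fun h _ h' _ => (cubeAt_injective hL ·)) ?_
  · intro h hh
    simp only [innerCorners, Finset.mem_filter] at hh
    obtain ⟨⟨-, hsub⟩, rfl⟩ := hh
    refine Finset.mem_filter.mpr ⟨Finset.mem_powerset.mpr hsub, -h, rfl, fun v hv => ?_⟩
    simp [extendPatZ, hv, patternAt]
  · intro Λ' hΛ'
    obtain ⟨hsub, g, rfl, hg⟩ := Finset.mem_filter.mp hΛ'
    have hcube : cubeAt L (-g) = translateZ g (stdCube d L) := by simp [cubeAt]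
    refine ⟨-g, ?_, hcube⟩
    rw [← hcube, Finset.mem_powerset] at hsub
    simp only [innerCorners, Finset.mem_filter]
    refine ⟨⟨hsub (self_mem_cubeAt hL _), hsub⟩, funext fun v => ?_⟩
    simpa [extendPatZ, patternAt, sub_eq_add_neg] using hg v v.2

theorem sum_innerCorners_eq_sum_sharpZ_smul {B : Type*} [NormedAddCommGroup B] [NormedSpace ℝ B]
    {F : Finset (Zd d) → B} {Ft : Finset (Zd d) → (Zd d → A) → B} [Fintype A]
    (hFt : IsPatternFnZ ω F Ft) (hL : 0 < L) (Q : Finset (Zd d)) :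
    ∑ h ∈ innerCorners L Q, F (cubeAt L h)
      = ∑ P : {x // x ∈ stdCube d L} → A, (sharpZ (stdCube d L) (extendPatZ ω _ P) Q ω : ℝ)
          • Ft (stdCube d L) (extendPatZ ω _ P) := by
  classical
  rw [← Finset.sum_fiberwise_of_maps_to (g := patternAt ω L) (t := Finset.univ)
    fun h _ => Finset.mem_univ _]
  refine Finset.sum_congr rfl fun P _ => ?_
  rw [sharpZ_extendPatZ_stdCube ω hL, Nat.cast_smul_eq_nsmul, ← Finset.sum_const]
  refine Finset.sum_congr rfl fun h hh => ?_
  rw [← (Finset.mem_filter.mp hh).2, hFt.apply_patternAt]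

end Patterns

theorem norm_inv_card_smul_sub_sum_sharpZ_le {d L : ℕ} {A : Type*} [Fintype A] {ω : Zd d → A}
    {B : Type*} [NormedAddCommGroup B] [NormedSpace ℝ B] {F : Finset (Zd d) → B}
    {b : BoundaryTermZ d} {Ft : Finset (Zd d) → (Zd d → A) → B} {C D : ℝ}
    (hF : AlmostAdditiveZ F b) (hFt : IsPatternFnZ ω F Ft)
    (hC : ∀ Λ : Finset (Zd d), Λ.Nonempty → ‖F Λ‖ ≤ C * Λ.card)
    (hD : ∀ Λ : Finset (Zd d), Λ.Nonempty → b.b Λ ≤ D * Λ.card)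
    (hL : 0 < L) {Q : Finset (Zd d)} (hQ : Q.Nonempty) :
    ‖(Q.card : ℝ)⁻¹ • F Q - ∑ P : {x // x ∈ stdCube d L} → A,
        ((sharpZ (stdCube d L) (extendPatZ ω _ P) Q ω : ℝ) / Q.card) •
          (((stdCube d L).card : ℝ)⁻¹ • Ft (stdCube d L) (extendPatZ ω _ P))‖
      ≤ (C + D) * ((rBoundaryZ (d * L + 1) Q).ncard / Q.card)
        + b.b (stdCube d L) / (stdCube d L).card := by
  have hΛpos : (0 : ℝ) < (stdCube d L).card := by exact_mod_cast (stdCube_nonempty hL).card_pos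
  have hQpos : (0 : ℝ) < Q.card := by exact_mod_cast hQ.card_pos
  have hrescale : (Q.card : ℝ)⁻¹ • F Q - ∑ P : {x // x ∈ stdCube d L} → A,
        ((sharpZ (stdCube d L) (extendPatZ ω _ P) Q ω : ℝ) / Q.card) •
          (((stdCube d L).card : ℝ)⁻¹ • Ft (stdCube d L) (extendPatZ ω _ P))
      = (((stdCube d L).card : ℝ) * Q.card)⁻¹ •
          (((stdCube d L).card : ℝ) • F Q - ∑ h ∈ innerCorners L Q, F (cubeAt L h)) := by
    rw [sum_innerCorners_eq_sum_sharpZ_smul ω hFt hL, smul_sub, Finset.smul_sum, smul_smul]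
    congr 1
    · congr 1; field_simp
    · refine Finset.sum_congr rfl fun P _ => ?_
      rw [smul_smul, smul_smul]
      congr 1; field_simp
  rw [hrescale, norm_smul, Real.norm_of_nonneg (by positivity)]
  calc _ ≤ (((stdCube d L).card : ℝ) * Q.card)⁻¹ * ((C + D) * ((stdCube d L).card
          * (rBoundaryZ (d * L + 1) Q).ncard) + Q.card * b.b (stdCube d L)) := by
        gcongr
        exact norm_card_smul_sub_sum_innerCorners_le hF hC hD hL Q
    _ = _ := by field_simp

theorem stmt2_general {d : ℕ} {A : Type*} [Fintype A] (ω : Zd d → A)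
    {B : Type*} [NormedAddCommGroup B] [NormedSpace ℝ B]
    (Q : ℕ → Finset (Zd d)) (hQ : IsFolnerZ Q)
    (F : Finset (Zd d) → B) (b : BoundaryTermZ d)
    (hAA : AlmostAdditiveZ F b)
    (hBd : ∃ C : ℝ, ∀ Λ : Finset (Zd d), Λ.Nonempty → ‖F Λ‖ ≤ C * Λ.card)
    (Ft : Finset (Zd d) → (Zd d → A) → B) (hFt : IsPatternFnZ ω F Ft)
    (ν : Finset (Zd d) → (Zd d → A) → ℝ)
    (hν : ∀ (Λ : Finset (Zd d)) (P : Zd d → A),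
      Tendsto (fun j => (sharpZ Λ P (Q j) ω : ℝ) / (Q j).card) atTop (nhds (ν Λ P)))
    (Fbar : B)
    (hFbar : Tendsto (fun j => ((Q j).card : ℝ)⁻¹ • F (Q j)) atTop (nhds Fbar)) :
    ∀ L : ℕ, 1 ≤ L →
      ‖Fbar - ∑ P : {x // x ∈ stdCube d L} → A,
          ν (stdCube d L) (extendPatZ ω (stdCube d L) P) •
            (((stdCube d L).card : ℝ)⁻¹ • Ft (stdCube d L) (extendPatZ ω (stdCube d L) P))‖
        ≤ b.b (stdCube d L) / (stdCube d L).card := by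
  intro L hL
  obtain ⟨C, hC⟩ := hBd
  obtain ⟨D, hD⟩ := b.bounded
  have hlim := hFbar.sub (tendsto_finsetSum Finset.univ fun P _ =>
    (hν (stdCube d L) (extendPatZ ω (stdCube d L) P)).smul_const
      (((stdCube d L).card : ℝ)⁻¹ • Ft (stdCube d L) (extendPatZ ω (stdCube d L) P)))
  have hbound : Tendsto (fun j => (C + D) * ((rBoundaryZ (d * L + 1) (Q j)).ncard / (Q j).card)
      + b.b (stdCube d L) / (stdCube d L).card) atTop
      (nhds (b.b (stdCube d L) / (stdCube d L).card)) := by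
    simpa using ((hQ.2 (d * L + 1) (Nat.succ_pos _)).const_mul (C + D)).add_const _
  exact le_of_tendsto_of_tendsto' hlim.norm hbound fun j =>
    norm_inv_card_smul_sub_sum_sharpZ_le hAA hFt hC hD hL (hQ.1 j)

/-- **Theorem (error bound between the limit and the frequency average).**
Under the assumptions of the ergodic theorem for finitely many colors on
`ℤ^d`, for every `L ≥ 1` one has
`‖F̄ − Σ_{P ∈ A^{Λ_L}} ν_P F̃(P)/|Λ_L|‖ ≤ b(Λ_L)/|Λ_L|`. -/
theorem stmt2 {d : ℕ} (hd : 1 ≤ d) {A : Type*} [Fintype A] (ω : Zd d → A)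
    {B : Type*} [NormedAddCommGroup B] [NormedSpace ℝ B] [CompleteSpace B]
    (Q : ℕ → Finset (Zd d)) (hQ : IsFolnerZ Q)
    (F : Finset (Zd d) → B) (b : BoundaryTermZ d)
    (hAA : AlmostAdditiveZ F b) (hInv : InvariantZ ω F)
    (hBd : ∃ C : ℝ, ∀ Λ : Finset (Zd d), Λ.Nonempty → ‖F Λ‖ ≤ C * Λ.card)
    (Ft : Finset (Zd d) → (Zd d → A) → B) (hFt : IsPatternFnZ ω F Ft)
    (ν : Finset (Zd d) → (Zd d → A) → ℝ)
    (hν : ∀ (Λ : Finset (Zd d)) (P : Zd d → A),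
      Tendsto (fun j => (sharpZ Λ P (Q j) ω : ℝ) / (Q j).card) atTop (nhds (ν Λ P)))
    (Fbar : B)
    (hFbar : Tendsto (fun j => ((Q j).card : ℝ)⁻¹ • F (Q j)) atTop (nhds Fbar)) :
    ∀ L : ℕ, 1 ≤ L →
      ‖Fbar - ∑ P : {x // x ∈ stdCube d L} → A,
          ν (stdCube d L) (extendPatZ ω (stdCube d L) P) •
            (((stdCube d L).card : ℝ)⁻¹ • Ft (stdCube d L) (extendPatZ ω (stdCube d L) P))‖
        ≤ b.b (stdCube d L) / (stdCube d L).card :=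
  stmt2_general ω Q hQ F b hAA hBd Ft hFt ν hν Fbar hFbar
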